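/- arXiv:math-ph/0408058 — 4 statements merged into one kernel-verified Lean document; each statement's English description precedes it below -/
import Mathlib

section
/- Let F be a real 2n×2n symplectic matrix and define the complex 2n×2n matrix N := −(i/2)·J·((1 − iJ)·F + 1 + iJ) (equivalently, N = (1/2)(F − 1) − (i/2)·J·(F + 1)). Then |det N| = 1 if and only if F is orthogonal, i.e. Fᵀ·F = 1. -/
open Matrix Complex

/-!
With `K = J` (so `K² = -1`, `Kᴴ = -K`) one has `N = ½((1 - iK)F - (1 + iK))`, and `(1 ∓ iK)/2`
are complementary self-adjoint idempotents; together with `FᵀKF = K` this gives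
`NᴴN = ½(FᵀF + 1)`, hence `|det N|² = 2^(-2n) det(FᵀF + 1)`. The positive semidefinite matrix
`G = FᵀF` has `det G = (det F)² = 1`, and by AM-GM on its eigenvalues
`det(G + 1) = ∏ (μᵢ + 1) ≥ ∏ 2√μᵢ = 2^(2n)`, with equality only if every `μᵢ = 1`, i.e. `G = 1`.
-/

theorem Finset.eq_one_of_prod_eq_one_of_prod_add_one_eq {ι : Type*} {s : Finset ι} {μ : ι → ℝ}
    (hμ : ∀ i ∈ s, 0 ≤ μ i) (hprod : ∏ i ∈ s, μ i = 1)
    (hprod_add : ∏ i ∈ s, (μ i + 1) = 2 ^ s.card) : ∀ i ∈ s, μ i = 1 := by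
  by_contra! ⟨j, hj, hμj⟩
  have hpos : ∀ i ∈ s, 0 < 4 * μ i := fun i hi =>
    mul_pos four_pos <| (hμ i hi).lt_of_ne fun h => by
      simp [Finset.prod_eq_zero hi h.symm] at hprod
  -- AM-GM: `4 μ ≤ (μ + 1)²`, strictly unless `μ = 1`.
  have hlt : ∏ i ∈ s, 4 * μ i < ∏ i ∈ s, (μ i + 1) ^ 2 :=
    Finset.prod_lt_prod hpos (fun i _ => by nlinarith [sq_nonneg (μ i - 1)])
      ⟨j, hj, by nlinarith [sq_pos_of_ne_zero (sub_ne_zero.mpr hμj)]⟩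
  rw [Finset.prod_mul_distrib, Finset.prod_const, hprod, Finset.prod_pow, hprod_add,
    ← pow_mul, pow_mul'] at hlt
  norm_num at hlt

namespace Matrix

section Hermitian

open scoped ComplexOrder

variable {𝕜 n : Type*} [RCLike 𝕜] [Fintype n] [DecidableEq n] {A : Matrix n n 𝕜}

theorem IsHermitian.det_add_one (hA : A.IsHermitian) :
    (A + 1).det = ∏ i, ((hA.eigenvalues i : 𝕜) + 1) := by
  set U := hA.eigenvectorUnitary
  have hU : (star U : Matrix n n 𝕜) * U = 1 := Unitary.coe_star_mul_self U
  conv_lhs => rw [hA.spectral_theorem, ← map_one (Unitary.conjStarAlgAut 𝕜 _ U), ← map_add,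
    Unitary.conjStarAlgAut_apply, det_mul_comm, ← mul_assoc, hU, one_mul, ← diagonal_one,
    diagonal_add, det_diagonal]
  rfl

theorem PosSemidef.det_add_one_eq_two_pow_iff (hA : A.PosSemidef) (hdet : A.det = 1) :
    (A + 1).det = 2 ^ Fintype.card n ↔ A = 1 := by
  refine ⟨fun h => ?_, fun h => ?_⟩
  · have hμ : ∀ i ∈ Finset.univ, hA.1.eigenvalues i = 1 := by
      refine Finset.eq_one_of_prod_eq_one_of_prod_add_one_eq
        (fun i _ => hA.eigenvalues_nonneg i) ?_ ?_
      · exact_mod_cast hA.1.det_eq_prod_eigenvalues.symm.trans hdet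
      · exact_mod_cast hA.1.det_add_one.symm.trans h
    have hdiag : (RCLike.ofReal ∘ hA.1.eigenvalues : n → 𝕜) = 1 := by
      ext i
      simp [hμ i (Finset.mem_univ i)]
    rw [hA.1.spectral_theorem, hdiag, Pi.one_def, diagonal_one, map_one]
  · rw [h, ← two_smul 𝕜, det_smul, det_one, mul_one]

end Hermitian

theorem det_mul_self_eq_one_of_transpose_mul_J_mul_eq {l R : Type*} [Fintype l]
    [DecidableEq l] [CommRing R] {F : Matrix (l ⊕ l) (l ⊕ l) R} (hF : Fᵀ * J l R * F = J l R) :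
    F.det * F.det = 1 := by
  have h := congrArg det hF
  rw [det_mul, det_mul, det_transpose] at h
  refine (isUnit_det_J l R).mul_left_cancel ?_
  linear_combination h

theorem map_ofReal_conjTranspose {m n : Type*} (X : Matrix m n ℝ) :
    (X.map ofReal)ᴴ = Xᵀ.map ofReal := by
  rw [← conjTranspose_eq_transpose_of_trivial,
    conjTranspose_map ofReal fun x => (conj_ofReal x).symm]

theorem norm_det_sq {n : Type*} [Fintype n] [DecidableEq n] (N : Matrix n n ℂ) :
    (‖N.det‖ : ℂ) ^ 2 = (Nᴴ * N).det := by
  rw [det_mul, det_conjTranspose, star_def, conj_mul']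

end Matrix

theorem star_mul_self_eq_half_star_mul_self_add_one {R : Type*} [Ring R] [StarRing R]
    [Algebra ℂ R] [StarModule ℂ R] {K A : R} (hK : K * K = -1) (hK_star : star K = -K)
    (hA : star A * K * A = K) :
    star ((-(I / 2)) • (K * ((1 - I • K) * A + 1 + I • K))) *
        ((-(I / 2)) • (K * ((1 - I • K) * A + 1 + I • K))) =
      (2⁻¹ : ℂ) • (star A * A + 1) := by
  have hN : (-(I / 2)) • (K * ((1 - I • K) * A + 1 + I • K)) =
      (2⁻¹ : ℂ) • ((1 - I • K) * A - (1 + I • K)) := by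
    simp only [mul_add, mul_sub, sub_mul, mul_one, one_mul, mul_smul_comm, smul_mul_assoc,
      ← mul_assoc, hK, neg_mul, smul_add, smul_sub, smul_neg, smul_smul]
    match_scalars <;> ring_nf <;> norm_num [I_sq]
  have hIK : star (I • K) = I • K := by rw [star_smul, hK_star, star_def, conj_I, neg_smul_neg]
  have hPP : (1 - I • K) * (1 - I • K) = (2 : ℂ) • (1 - I • K) := by
    simp only [mul_sub, sub_mul, mul_one, one_mul, smul_mul_smul, hK, I_mul_I]
    module
  have hQQ : (1 + I • K) * (1 + I • K) = (2 : ℂ) • (1 + I • K) := by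
    simp only [mul_add, add_mul, mul_one, one_mul, smul_mul_smul, hK, I_mul_I]
    module
  have hPQ : (1 - I • K) * (1 + I • K) = 0 := by
    simp only [mul_add, sub_mul, mul_one, one_mul, smul_mul_smul, hK, I_mul_I]
    module
  have hQP : (1 + I • K) * (1 - I • K) = 0 := by
    simp only [mul_sub, add_mul, mul_one, one_mul, smul_mul_smul, hK, I_mul_I]
    module
  have hAPA : star A * (1 - I • K) * A + (1 + I • K) = star A * A + 1 := by
    rw [mul_sub, sub_mul, mul_one, mul_smul_comm, smul_mul_assoc, hA]
    abel
  have hP_star : star (1 - I • K) = 1 - I • K := by rw [star_sub, star_one, hIK]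
  have hQ_star : star (1 + I • K) = 1 + I • K := by rw [star_add, star_one, hIK]
  rw [hN]
  set P := 1 - I • K
  set Q := 1 + I • K
  calc star ((2⁻¹ : ℂ) • (P * A - Q)) * ((2⁻¹ : ℂ) • (P * A - Q))
      = (4⁻¹ : ℂ) • ((star A * P - Q) * (P * A - Q)) := by
        rw [star_smul, star_sub, star_mul, hP_star, hQ_star, smul_mul_smul]
        norm_num
    _ = (4⁻¹ : ℂ) • (star A * (P * P) * A - star A * (P * Q) - Q * P * A + Q * Q) := by
        congr 1
        noncomm_ring
    _ = (2⁻¹ : ℂ) • (star A * P * A + Q) := by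
        rw [hPP, hPQ, hQP, hQQ, mul_zero, zero_mul, mul_smul_comm, smul_mul_assoc]
        module
    _ = (2⁻¹ : ℂ) • (star A * A + 1) := by rw [hAPA]

theorem stmt_5 (n : ℕ) (F : Matrix (Fin n ⊕ Fin n) (Fin n ⊕ Fin n) ℝ)
    (hF : Fᵀ * Matrix.J (Fin n) ℝ * F = Matrix.J (Fin n) ℝ)
    (N : Matrix (Fin n ⊕ Fin n) (Fin n ⊕ Fin n) ℂ)
    (hN : N = (-(Complex.I / 2)) •
      ((Matrix.J (Fin n) ℝ).map Complex.ofReal *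
        ((1 - Complex.I • (Matrix.J (Fin n) ℝ).map Complex.ofReal) * F.map Complex.ofReal
          + 1 + Complex.I • (Matrix.J (Fin n) ℝ).map Complex.ofReal))) :
    ‖N.det‖ = 1 ↔ Fᵀ * F = 1 := by
  let φ := ofRealHom.mapMatrix (m := Fin n ⊕ Fin n)
  have hNN : Nᴴ * N = (2⁻¹ : ℂ) • φ (Fᵀ * F + 1) := by
    rw [map_add, map_mul, map_one]
    change Nᴴ * N = 2⁻¹ • (Fᵀ.map ofReal * F.map ofReal + 1)
    rw [← map_ofReal_conjTranspose]
    refine hN ▸ star_mul_self_eq_half_star_mul_self_add_one ?_ ?_ ?_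
    · exact (by rw [← map_mul, J_squared, map_neg, map_one] : φ (J _ ℝ) * φ (J _ ℝ) = -1)
    · rw [star_eq_conjTranspose, map_ofReal_conjTranspose, J_transpose]
      exact map_neg φ _
    · rw [star_eq_conjTranspose, map_ofReal_conjTranspose]
      exact (by rw [← map_mul, ← map_mul, hF] : φ Fᵀ * φ (J _ ℝ) * φ F = φ (J _ ℝ))
  have hnorm : ‖N.det‖ ^ 2 = 2⁻¹ ^ Fintype.card (Fin n ⊕ Fin n) * (Fᵀ * F + 1).det := by
    have h := N.norm_det_sq
    rw [hNN, det_smul, ← RingHom.map_det, ofRealHom_eq_coe] at h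
    rw [← ofReal_inj]
    push_cast
    exact h
  have hpsd : (Fᵀ * F).PosSemidef := by
    simpa [conjTranspose_eq_transpose_of_trivial] using posSemidef_conjTranspose_mul_self F
  have hdet : (Fᵀ * F).det = 1 := by
    rw [det_mul, det_transpose, det_mul_self_eq_one_of_transpose_mul_J_mul_eq hF]
  rw [← pow_left_inj₀ (norm_nonneg _) zero_le_one two_ne_zero, hnorm, one_pow, inv_pow,
    inv_mul_eq_one₀ (by positivity), eq_comm]
  exact hpsd.det_add_one_eq_two_pow_iff hdet
end

section
/- Let F be a real 2n×2n symplectic matrix such that F − 1 is invertible, and let A := (1/2)·J·(F + 1)·(F − 1)⁻¹. Then the complex matrix 1 − 2iA is invertible, and for every real vector z ∈ ℝ^{2n} one has Re( zᵀ [1 − (1 + iJ)·(1 − 2iA)⁻¹·(1 − iJ)] z ) ≥ 0; equivalently, the Gaussian factor |exp(−(1/(4ħ))·zᵀ[1 − (1+iJ)(1−2iA)⁻¹(1−iJ)]z)| is ≤ 1 for every ħ > 0. -/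
open Matrix Complex

/-!
With `S = iJ` one has `S² = 1`, `Sᴴ = S`, and the symplectic condition becomes `Fᴴ S F = S`:
`F` preserves the indefinite Hermitian form `⟨x, S y⟩`. The defining identity
`2A(F - 1) = J(F + 1)` gives `(1 - 2iA)(F - 1) = (1 - S)F - (1 + S) =: K`, and `K` is injective,
since `F` would map a kernel vector from the `-1`-eigenspace of `S` to the `+1`-eigenspace while
preserving the form. With the spectral projections `P, Q = (1 ± S)/2` and `K₀ = K/2 = QF - P`,
the matrix `B` equals `1 - 2T` for `T = P(F - 1)K₀⁻¹Q`, and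
`B + Bᴴ = 2((P - T)ᴴ(P - T) + (K₀⁻¹Q)ᴴ(K₀⁻¹Q))` is positive semidefinite. Hence
`Re(zᵀBz) = zᵀ(B + Bᴴ)z / 2 ≥ 0` for real `z`.
-/

open scoped ComplexOrder

namespace Matrix

theorem conjTranspose_map_ofReal {m n : Type*} (M : Matrix m n ℝ) :
    (M.map ofReal)ᴴ = Mᵀ.map ofReal := by
  ext i j; simp [conjTranspose_apply]

theorem map_ofReal_mul {m n o : Type*} [Fintype n] (M : Matrix m n ℝ) (N : Matrix n o ℝ) :
    (M * N).map ofReal = M.map ofReal * N.map ofReal :=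
  Matrix.map_mul (f := ofRealHom)

section KreinUnitary

variable {m 𝕜 : Type*} [Fintype m] [RCLike 𝕜]

theorem re_star_dotProduct_mulVec_nonneg {M : Matrix m m 𝕜} (hM : (M + Mᴴ).PosSemidef)
    (x : m → 𝕜) : 0 ≤ RCLike.re (star x ⬝ᵥ (M *ᵥ x)) := by
  have hMH : star x ⬝ᵥ (Mᴴ *ᵥ x) = star (star x ⬝ᵥ (M *ᵥ x)) := by
    rw [dotProduct_mulVec, ← star_mulVec, star_dotProduct]
  have h := (RCLike.nonneg_iff.mp (hM.dotProduct_mulVec_nonneg x)).1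
  rw [add_mulVec, dotProduct_add, hMH, map_add, RCLike.star_def, RCLike.conj_re] at h
  linarith

variable [DecidableEq m]

theorem isUnit_one_sub_mul_sub_one_add {S F : Matrix m m 𝕜} (hS : S * S = 1)
    (hF : Fᴴ * S * F = S) : IsUnit ((1 - S) * F - (1 + S)) := by
  rw [isUnit_iff_isUnit_det, isUnit_iff_ne_zero]
  intro hdet
  obtain ⟨v, hv, hKv⟩ := exists_mulVec_eq_zero_iff.mpr hdet
  set u := F *ᵥ v
  have hx : (1 - S) *ᵥ u = (1 + S) *ᵥ v := by
    rwa [sub_mulVec, ← mulVec_mulVec, sub_eq_zero] at hKv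
  -- `x = (1 - S) u = (1 + S) v` satisfies both `S x = -x` and `S x = x`
  have hx0 : (1 + S) *ᵥ v = 0 := by
    refine self_eq_neg.mp ?_
    calc (1 + S) *ᵥ v = (S * (1 + S)) *ᵥ v := by rw [mul_add, hS, mul_one, add_comm]
      _ = S *ᵥ ((1 - S) *ᵥ u) := by rw [hx, mulVec_mulVec]
      _ = -((1 - S) *ᵥ u) := by rw [mulVec_mulVec, mul_sub, hS, mul_one, ← neg_sub, neg_mulVec]
      _ = -((1 + S) *ᵥ v) := by rw [hx]
  have hv' : S *ᵥ v = -v := by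
    rwa [add_mulVec, one_mulVec, add_eq_zero_iff_eq_neg'] at hx0
  have hu' : S *ᵥ u = u := by
    rwa [← hx, sub_mulVec, one_mulVec, sub_eq_zero, eq_comm] at hx0
  have hform : star v ⬝ᵥ (S *ᵥ v) = star u ⬝ᵥ (S *ᵥ u) := by
    conv_lhs => rw [← hF]
    rw [← mulVec_mulVec, ← mulVec_mulVec, dotProduct_mulVec, ← star_mulVec]
  rw [hv', hu', dotProduct_neg, neg_eq_iff_add_eq_zero, add_eq_zero_iff_of_nonneg
    (dotProduct_star_self_nonneg _) (dotProduct_star_self_nonneg _)] at hform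
  exact hv (dotProduct_star_self_eq_zero.mp hform.1)

theorem isStarProjection_inv_two_smul_one_add {S : Matrix m m 𝕜} (hS : S * S = 1) (hSH : Sᴴ = S) :
    IsStarProjection ((2 : 𝕜)⁻¹ • (1 + S)) := by
  refine ⟨?_, ?_⟩
  · rw [IsIdempotentElem, smul_mul_smul]
    simp only [mul_add, add_mul, one_mul, mul_one, hS]
    module
  · rw [IsSelfAdjoint, star_eq_conjTranspose, conjTranspose_smul, conjTranspose_add,
      conjTranspose_one, hSH, star_inv₀, star_ofNat]

theorem one_sub_sub_conjTranspose_eq {P Q F K T : Matrix m m 𝕜} (hP : IsStarProjection P)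
    (hPQ : P + Q = 1) (hF : Fᴴ * (P - Q) * F = P - Q) (hK : K = Q * F - P) (hKu : IsUnit K)
    (hT : T = P * (F - 1) * K⁻¹ * Q) :
    1 - T - Tᴴ = (P - T)ᴴ * (P - T) + (K⁻¹ * Q)ᴴ * (K⁻¹ * Q) := by
  obtain rfl : Q = 1 - P := eq_sub_of_add_eq' hPQ
  set W := K⁻¹ * (1 - P)
  have hPQ : P * (1 - P) = 0 := hP.mul_one_sub_self
  have hPP : P * P = P := hP.isIdempotentElem.eq
  have hQQ : (1 - P) * (1 - P) = 1 - P := hP.one_sub.isIdempotentElem.eq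
  have hPH : Pᴴ = P := hP.isSelfAdjoint.star_eq
  have hQH : (1 - P)ᴴ = 1 - P := hP.one_sub.isSelfAdjoint.star_eq
  have hKN : K * K⁻¹ = 1 := K.mul_nonsing_inv ((isUnit_iff_isUnit_det K).mp hKu)
  have hPK : P * K = -P := by rw [hK, mul_sub, ← mul_assoc, hPQ, zero_mul, hPP, zero_sub]
  have hPN : P * K⁻¹ = -P := by
    rw [← neg_eq_iff_eq_neg, ← neg_mul, ← hPK, mul_assoc, hKN, mul_one]
  have hKW : K * W = 1 - P := by rw [← mul_assoc, hKN, one_mul]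
  have hPW : P * W = 0 := by rw [← mul_assoc, hPN, neg_mul, hPQ, neg_zero]
  have hTW : T = P * F * W := by
    rw [hT, mul_sub P F, mul_one, sub_mul, sub_mul, hPN, neg_mul, hPQ, sub_neg_eq_add, add_zero,
      mul_assoc _ K⁻¹]
  have hKK : Kᴴ * K + P = Fᴴ * P * F + 1 := by
    have hFQF : Fᴴ * (1 - P) * F = Fᴴ * P * F - Fᴴ * (P - (1 - P)) * F := by noncomm_ring
    calc Kᴴ * K + P
        = Fᴴ * ((1 - P) * (1 - P)) * F - Fᴴ * ((1 - P) * P) - P * (1 - P) * F + P * P + P := by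
          rw [hK, conjTranspose_sub, conjTranspose_mul, hQH, hPH]; noncomm_ring
      _ = Fᴴ * P * F + 1 := by
          rw [hQQ, hP.one_sub_mul_self, hPQ, hPP, hFQF, hF]; noncomm_ring
  have hTT : Tᴴ * T + Wᴴ * W = 1 - P := by
    calc Tᴴ * T + Wᴴ * W = Wᴴ * (Fᴴ * P * F + 1) * W := by
          rw [hTW]; simp only [conjTranspose_mul, hPH, mul_add, add_mul, mul_one, mul_assoc]
          rw [← mul_assoc P P, hPP]
      _ = (K * W)ᴴ * (K * W) + (P * W)ᴴ * (P * W) := by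
          rw [← hKK]; simp only [conjTranspose_mul, hPH, mul_add, add_mul, mul_assoc]
          rw [← mul_assoc P P, hPP]
      _ = 1 - P := by rw [hKW, hPW, hQH, hQQ, conjTranspose_zero, zero_mul, add_zero]
  have hPT : P * T = T := by simp only [hTW, ← mul_assoc, hPP]
  have hTP : Tᴴ * P = Tᴴ := by
    simpa only [conjTranspose_mul, hPH] using congrArg conjTranspose hPT
  calc 1 - T - Tᴴ = P - T - Tᴴ + (Tᴴ * T + Wᴴ * W) := by rw [hTT]; abel
    _ = (P - T)ᴴ * (P - T) + Wᴴ * W := by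
      rw [conjTranspose_sub, hPH, sub_mul, mul_sub, mul_sub, hPP, hPT, hTP]; abel

theorem posSemidef_add_conjTranspose_of_cayley {S F M : Matrix m m 𝕜} (hS : S * S = 1)
    (hSH : Sᴴ = S) (hF : Fᴴ * S * F = S)
    (hM : M = 1 - (1 + S) * ((F - 1) * ((1 - S) * F - (1 + S))⁻¹) * (1 - S)) :
    (M + Mᴴ).PosSemidef := by
  set P : Matrix m m 𝕜 := (2 : 𝕜)⁻¹ • (1 + S)
  set Q : Matrix m m 𝕜 := (2 : 𝕜)⁻¹ • (1 - S)
  set K := Q * F - P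
  set T := P * (F - 1) * K⁻¹ * Q
  have hP : IsStarProjection P := isStarProjection_inv_two_smul_one_add hS hSH
  have hPQ : P + Q = 1 := by module
  have hPQS : P - Q = S := by module
  have hK : (1 - S) * F - (1 + S) = (2 : 𝕜) • K := by
    simp only [K, P, Q, smul_mul_assoc]; module
  have hKu : IsUnit K := by
    have := isUnit_one_sub_mul_sub_one_add hS hF
    rw [hK, isUnit_iff_isUnit_det, det_smul, IsUnit.mul_iff] at this
    exact (isUnit_iff_isUnit_det K).mpr this.2
  have hKinv : ((2 : 𝕜) • K)⁻¹ = (2 : 𝕜)⁻¹ • K⁻¹ := inv_eq_left_inv <| by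
    rw [smul_mul_smul, K.nonsing_inv_mul ((isUnit_iff_isUnit_det K).mp hKu),
      inv_mul_cancel₀ two_ne_zero, one_smul]
  have hMT : M = 1 - (2 : 𝕜) • T := by
    rw [hM, hK, hKinv]
    simp only [T, P, Q, smul_mul_assoc, mul_smul_comm, smul_smul, mul_assoc]
    module
  have hid := one_sub_sub_conjTranspose_eq hP hPQ (by rwa [hPQS]) rfl hKu rfl
  have h2 : M + Mᴴ = (2 : 𝕜) • (1 - T - Tᴴ) := by
    rw [hMT, conjTranspose_sub, conjTranspose_one, conjTranspose_smul, star_ofNat]; module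
  rw [h2, hid]
  exact ((posSemidef_conjTranspose_mul_self _).add (posSemidef_conjTranspose_mul_self _)).smul
    zero_le_two

end KreinUnitary

section Symplectic

variable {l : Type*} [DecidableEq l]

theorem conjTranspose_I_smul_map_J : (I • (J l ℝ).map ofReal)ᴴ = I • (J l ℝ).map ofReal := by
  rw [conjTranspose_smul, conjTranspose_map_ofReal, J_transpose, Matrix.map_neg _ ofReal_neg,
    star_def, conj_I, neg_smul_neg]

variable [Fintype l]

theorem I_smul_map_J_mul_self :
    (I • (J l ℝ).map ofReal) * (I • (J l ℝ).map ofReal) = 1 := by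
  rw [smul_mul_smul, ← map_ofReal_mul, J_squared, I_mul_I, Matrix.map_neg _ ofReal_neg,
    Matrix.map_one _ ofReal_zero ofReal_one, neg_smul_neg, one_smul]

theorem conjTranspose_map_mul_I_smul_map_J_mul_map {F : Matrix (l ⊕ l) (l ⊕ l) ℝ}
    (hF : Fᵀ * J l ℝ * F = J l ℝ) :
    (F.map ofReal)ᴴ * (I • (J l ℝ).map ofReal) * F.map ofReal = I • (J l ℝ).map ofReal := by
  rw [conjTranspose_map_ofReal, mul_smul_comm, smul_mul_assoc, ← map_ofReal_mul,
    ← map_ofReal_mul, hF]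

theorem one_sub_two_I_smul_map_mul_map_sub_one {F A : Matrix (l ⊕ l) (l ⊕ l) ℝ}
    (hinv : IsUnit (F - 1)) (hA : A = (1 / 2 : ℝ) • (J l ℝ * (F + 1) * (F - 1)⁻¹)) :
    (1 - (2 * I) • A.map ofReal) * (F.map ofReal - 1) =
      (1 - I • (J l ℝ).map ofReal) * F.map ofReal - (1 + I • (J l ℝ).map ofReal) := by
  set φ := (ofRealHom : ℝ →+* ℂ).mapMatrix (m := l ⊕ l)
  have hAF : A * (F - 1) + A * (F - 1) = J l ℝ * (F + 1) := by
    rw [hA, smul_mul_assoc, mul_assoc _ (F - 1)⁻¹,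
      nonsing_inv_mul _ ((isUnit_iff_isUnit_det _).mp hinv), mul_one, ← add_smul]
    norm_num
  calc (1 - (2 * I) • φ A) * (φ F - 1) = (φ F - 1) - I • φ (A * (F - 1) + A * (F - 1)) := by
        rw [map_add, map_mul, map_sub, map_one, sub_mul, one_mul, smul_mul_assoc]; module
    _ = (1 - I • φ (J l ℝ)) * φ F - (1 + I • φ (J l ℝ)) := by
        rw [hAF, map_mul, map_add, map_one]
        simp only [mul_add, sub_mul, smul_mul_assoc, one_mul, mul_one]; module

end Symplectic

end Matrix

theorem Complex.norm_exp_neg_ofReal_mul_le_one {c : ℝ} (hc : 0 ≤ c) {w : ℂ} (hw : 0 ≤ w.re) :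
    ‖exp (-(c : ℂ) * w)‖ ≤ 1 := by
  rw [norm_exp, Real.exp_le_one_iff, neg_mul, neg_re, re_ofReal_mul, neg_nonpos]
  exact mul_nonneg hc hw

theorem stmt_7 (n : ℕ) (F : Matrix (Fin n ⊕ Fin n) (Fin n ⊕ Fin n) ℝ)
    (hF : Fᵀ * Matrix.J (Fin n) ℝ * F = Matrix.J (Fin n) ℝ)
    (hinv : IsUnit (F - 1))
    (A : Matrix (Fin n ⊕ Fin n) (Fin n ⊕ Fin n) ℝ)
    (hA : A = (1 / 2 : ℝ) • (Matrix.J (Fin n) ℝ * (F + 1) * (F - 1)⁻¹))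
    (B : Matrix (Fin n ⊕ Fin n) (Fin n ⊕ Fin n) ℂ)
    (hB : B = 1 - (1 + Complex.I • (Matrix.J (Fin n) ℝ).map Complex.ofReal) *
      (1 - (2 * Complex.I) • A.map Complex.ofReal)⁻¹ *
      (1 - Complex.I • (Matrix.J (Fin n) ℝ).map Complex.ofReal)) :
    IsUnit (1 - (2 * Complex.I) • A.map Complex.ofReal) ∧
    ∀ z : (Fin n ⊕ Fin n) → ℝ,
      (0 ≤ ((fun j => (z j : ℂ)) ⬝ᵥ (B *ᵥ fun j => (z j : ℂ))).re) ∧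
      ∀ hbar : ℝ, 0 < hbar →
        ‖Complex.exp (-(1 / (4 * hbar)) *
          ((fun j => (z j : ℂ)) ⬝ᵥ (B *ᵥ fun j => (z j : ℂ))))‖ ≤ 1 := by
  set S := I • (J (Fin n) ℝ).map ofReal
  have hFS := conjTranspose_map_mul_I_smul_map_J_mul_map hF
  have hK := (isUnit_iff_isUnit_det _).mp
    (isUnit_one_sub_mul_sub_one_add I_smul_map_J_mul_self hFS)
  have hCK : (1 - (2 * I) • A.map ofReal) * ((F.map ofReal - 1) *
      ((1 - S) * F.map ofReal - (1 + S))⁻¹) = 1 := by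
    rw [← mul_assoc, one_sub_two_I_smul_map_mul_map_sub_one hinv hA, mul_nonsing_inv _ hK]
  have hBS : (B + Bᴴ).PosSemidef :=
    posSemidef_add_conjTranspose_of_cayley I_smul_map_J_mul_self conjTranspose_I_smul_map_J hFS
      (by rw [hB, inv_eq_right_inv hCK])
  refine ⟨(isUnit_iff_isUnit_det _).mpr (isUnit_det_of_right_inverse hCK), fun z => ?_⟩
  have hre := re_star_dotProduct_mulVec_nonneg hBS fun j => (z j : ℂ)
  have hz : star (fun j => (z j : ℂ)) = fun j => (z j : ℂ) := by ext; simp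
  rw [hz, RCLike.re_to_complex] at hre
  refine ⟨hre, fun hbar hbar_pos => ?_⟩
  have hc : -(1 / (4 * (hbar : ℂ))) = -((1 / (4 * hbar) : ℝ) : ℂ) := by push_cast; ring
  rw [hc]
  exact norm_exp_neg_ofReal_mul_le_one (by positivity) hre
end

section
/- (Mandelstam–Tamm inequality.) Let E be a complex Hilbert space, H a bounded self-adjoint operator on E, ψ ∈ E with ‖ψ‖ = 1, and ħ > 0. Set Ē := ⟨ψ, Hψ⟩ (a real number) and ΔE := √(⟨ψ, (H − Ē·1)²ψ⟩), and assume ΔE > 0. Then for every t with 0 ≤ t ≤ πħ/(2ΔE), the return probability satisfies |⟨ψ, exp(−(i t/ħ)·H) ψ⟩|² ≥ cos²(t·ΔE/ħ). -/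
/-!
Write `K = H - Ē` and measure time in units of `ħ`. Shifting `H` by `Ē` only multiplies the
evolution by a phase, and the amplitude `a(s) = ⟪ψ, e^{-isK} ψ⟫` satisfies `a(0) = 1` and
`|a'(s)| = |⟪Kψ, e^{-isK} ψ⟫| ≤ ‖Kψ‖ √(1 - |a(s)|²)`, because `Kψ ⊥ ψ` and `e^{-isK}` is unitary.
So `f = Re a` obeys `f' ≥ -ω √(1 - f²)` with `ω = ‖Kψ‖ = ΔE`, and comparing `f` with `cos (ω s)`,
the extremal solution, gives `cos (ω s) ≤ f(s) ≤ |a(s)|` as long as `ω s < π`.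
-/

open scoped InnerProductSpace
open Real Set Filter Topology

/- `cos (ω s)` itself touches `f` at `s = 0` with the same derivative, so the barrier is started
strictly below `f` and made strictly steeper. -/
theorem cos_add_mul_le_of_neg_deriv_le {f f' : ℝ → ℝ} {ω T ε : ℝ} (hω : 0 ≤ ω)
    (hf : ∀ s, HasDerivAt f (f' s) s) (hf0 : f 0 = 1)
    (hf' : ∀ s, -(ω * √(1 - f s ^ 2)) ≤ f' s) (hε : 0 < ε) (hT : ε + (ω + ε) * T < π) :
    ∀ s ∈ Icc 0 T, cos (ε + (ω + ε) * s) ≤ f s := by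
  have hB : ∀ s, HasDerivAt (fun s => cos (ε + (ω + ε) * s))
      (-sin (ε + (ω + ε) * s) * (ω + ε)) s :=
    fun s => by simpa using ((hasDerivAt_id s).const_mul (ω + ε)).const_add ε |>.cos
  refine image_le_of_deriv_right_lt_deriv_boundary'
    (fun s _ => (hB s).continuousAt.continuousWithinAt) (fun s _ => (hB s).hasDerivWithinAt)
    (by simpa [hf0] using cos_le_one ε) (fun s _ => (hf s).continuousAt.continuousWithinAt)
    (fun s _ => (hf s).hasDerivWithinAt) ?_
  rintro s ⟨hs0, hsT⟩ hs
  set θ := ε + (ω + ε) * s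
  -- at a contact point `f s = cos θ` with `0 < θ < π` the bound on `f'` reads `-ω sin θ ≤ f' s`
  have hθ : 0 < sin θ := sin_pos_of_pos_of_lt_pi (by positivity) (by nlinarith)
  have hsqrt : √(1 - f s ^ 2) = sin θ := by rw [← hs, ← sin_sq, sqrt_sq hθ.le]
  nlinarith [hf' s]

theorem cos_mul_le_of_neg_deriv_le {f f' : ℝ → ℝ} {ω T : ℝ} (hω : 0 ≤ ω)
    (hf : ∀ s, HasDerivAt f (f' s) s) (hf0 : f 0 = 1)
    (hf' : ∀ s, -(ω * √(1 - f s ^ 2)) ≤ f' s) (hT : 0 ≤ T) (hωT : ω * T < π) :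
    cos (ω * T) ≤ f T := by
  have hcont : Continuous fun ε : ℝ => ε + (ω + ε) * T := by fun_prop
  have hlim : Tendsto (fun ε => cos (ε + (ω + ε) * T)) (𝓝[>] 0) (𝓝 (cos (ω * T))) := by
    have : Continuous fun ε : ℝ => cos (ε + (ω + ε) * T) := by fun_prop
    simpa using (this.tendsto 0).mono_left nhdsWithin_le_nhds
  have hsmall : ∀ᶠ ε in 𝓝[>] (0 : ℝ), ε + (ω + ε) * T < π :=
    nhdsWithin_le_nhds <| (hcont.tendsto 0).eventually (gt_mem_nhds (by simpa using hωT))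
  refine le_of_tendsto hlim ?_
  filter_upwards [hsmall, self_mem_nhdsWithin] with ε hε hε0
  exact cos_add_mul_le_of_neg_deriv_le hω hf hf0 hf' hε0 hε T ⟨hT, le_rfl⟩

section Projection

variable {𝕜 E : Type*} [RCLike 𝕜] [NormedAddCommGroup E] [InnerProductSpace 𝕜 E]

theorem norm_sub_inner_smul_sq {ψ : E} (hψ : ‖ψ‖ = 1) (v : E) :
    ‖v - ⟪ψ, v⟫_𝕜 • ψ‖ ^ 2 = ‖v‖ ^ 2 - ‖⟪ψ, v⟫_𝕜‖ ^ 2 := by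
  have horth : ⟪⟪ψ, v⟫_𝕜 • ψ, v - ⟪ψ, v⟫_𝕜 • ψ⟫_𝕜 = 0 := by
    rw [inner_sub_right, inner_smul_left, inner_smul_left, inner_smul_right,
      inner_self_eq_norm_sq_to_K, hψ, RCLike.ofReal_one, one_pow, mul_one, RCLike.conj_mul,
      sub_self]
  have := norm_add_sq_eq_norm_sq_add_norm_sq_of_inner_eq_zero _ _ horth
  rw [add_sub_cancel, norm_smul, hψ, mul_one] at this
  nlinarith

theorem norm_inner_le_of_inner_eq_zero {ψ w : E} (hψ : ‖ψ‖ = 1) (hw : ⟪w, ψ⟫_𝕜 = 0) (v : E) :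
    ‖⟪w, v⟫_𝕜‖ ≤ ‖w‖ * √(‖v‖ ^ 2 - ‖⟪ψ, v⟫_𝕜‖ ^ 2) := by
  have : ⟪w, v⟫_𝕜 = ⟪w, v - ⟪ψ, v⟫_𝕜 • ψ⟫_𝕜 := by simp [inner_sub_right, inner_smul_right, hw]
  rw [this, ← norm_sub_inner_smul_sq hψ, sqrt_sq (norm_nonneg _)]
  exact norm_inner_le_norm _ _

end Projection

theorem NormedSpace.exp_smul_add_smul_one {𝔸 : Type*} [NormedRing 𝔸] [NormedAlgebra ℂ 𝔸]
    [CompleteSpace 𝔸] (z c : ℂ) (A : 𝔸) :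
    NormedSpace.exp (z • (A + c • 1)) = Complex.exp (z * c) • NormedSpace.exp (z • A) := by
  let : NormedAlgebra ℚ 𝔸 := .restrictScalars ℚ ℂ 𝔸
  rw [smul_add, smul_smul, ← Algebra.algebraMap_eq_smul_one,
    exp_add_of_commute (Algebra.commute_algebraMap_right _ _), ← algebraMap_exp_comm,
    ← Algebra.commutes, ← Algebra.smul_def, Complex.exp_eq_exp_ℂ]

section TimeEvolution

variable {E : Type*} [NormedAddCommGroup E] [InnerProductSpace ℂ E] [CompleteSpace E]

noncomputable def timeEvolution (K : E →L[ℂ] E) (s : ℝ) : E →L[ℂ] E :=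
  NormedSpace.exp ((-(Complex.I * s)) • K)

@[simp]
theorem timeEvolution_zero (K : E →L[ℂ] E) : timeEvolution K 0 = 1 := by
  simp [timeEvolution]

theorem hasDerivAt_timeEvolution (K : E →L[ℂ] E) (s : ℝ) :
    HasDerivAt (timeEvolution K) ((-Complex.I) • (K * timeEvolution K s)) s := by
  have hlin : HasDerivAt (fun s : ℝ => -(Complex.I * s)) (-Complex.I) s := by
    simpa using (hasDerivAt_id s).ofReal_comp.const_mul (-Complex.I)
  exact (hasDerivAt_exp_smul_const' K _).scomp s hlin

theorem hasDerivAt_inner_timeEvolution (K : E →L[ℂ] E) (x y : E) (s : ℝ) :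
    HasDerivAt (fun s => ⟪x, timeEvolution K s y⟫_ℂ)
      (-Complex.I * ⟪x, K (timeEvolution K s y)⟫_ℂ) s := by
  let L : (E →L[ℂ] E) →L[ℝ] ℂ :=
    ((innerSL ℂ x).comp (ContinuousLinearMap.apply ℂ E y)).restrictScalars ℝ
  simpa [L, inner_smul_right, Function.comp_def] using
    L.hasFDerivAt.comp_hasDerivAt s (hasDerivAt_timeEvolution K s)

theorem IsSelfAdjoint.timeEvolution_mem_unitary {K : E →L[ℂ] E} (hK : IsSelfAdjoint K) (s : ℝ) :
    timeEvolution K s ∈ unitary (E →L[ℂ] E) := by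
  let : NormedAlgebra ℚ (E →L[ℂ] E) := .restrictScalars ℚ ℂ _
  refine NormedSpace.exp_mem_unitary_of_mem_skewAdjoint (hK.smul_mem_skewAdjoint ?_)
  simp [skewAdjoint.mem_iff, Complex.conj_ofReal]

variable {K : E →L[ℂ] E} {ψ : E}

theorem IsSelfAdjoint.norm_timeEvolution_apply (hK : IsSelfAdjoint K) (s : ℝ) (x : E) :
    ‖timeEvolution K s x‖ = ‖x‖ :=
  ContinuousLinearMap.norm_map_of_mem_unitary (hK.timeEvolution_mem_unitary s) x

theorem IsSelfAdjoint.norm_inner_apply_timeEvolution_le (hK : IsSelfAdjoint K) (hψ : ‖ψ‖ = 1)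
    (hKψ : ⟪ψ, K ψ⟫_ℂ = 0) (s : ℝ) :
    ‖⟪ψ, K (timeEvolution K s ψ)⟫_ℂ‖ ≤ ‖K ψ‖ * √(1 - ‖⟪ψ, timeEvolution K s ψ⟫_ℂ‖ ^ 2) := by
  have hsymm : ∀ x y, ⟪K x, y⟫_ℂ = ⟪x, K y⟫_ℂ := hK.isSymmetric
  have := norm_inner_le_of_inner_eq_zero hψ (hsymm ψ ψ ▸ hKψ) (timeEvolution K s ψ)
  rwa [hK.norm_timeEvolution_apply, hψ, one_pow, hsymm] at this

theorem IsSelfAdjoint.cos_le_re_inner_timeEvolution (hK : IsSelfAdjoint K) (hψ : ‖ψ‖ = 1)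
    (hKψ : ⟪ψ, K ψ⟫_ℂ = 0) {s : ℝ} (hs : 0 ≤ s) (hsπ : ‖K ψ‖ * s < π) :
    cos (‖K ψ‖ * s) ≤ (⟪ψ, timeEvolution K s ψ⟫_ℂ).re := by
  refine cos_mul_le_of_neg_deriv_le (norm_nonneg _)
    (f' := fun s => (-Complex.I * ⟪ψ, K (timeEvolution K s ψ)⟫_ℂ).re)
    (fun s => Complex.reCLM.hasFDerivAt.comp_hasDerivAt s
      (hasDerivAt_inner_timeEvolution K ψ ψ s))
    (by simp [inner_self_eq_norm_sq_to_K, hψ]) (fun s => ?_) hs hsπ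
  set a := ⟪ψ, timeEvolution K s ψ⟫_ℂ
  have hre : a.re ^ 2 ≤ ‖a‖ ^ 2 := by
    simpa using pow_le_pow_left₀ (abs_nonneg _) (Complex.abs_re_le_norm a) 2
  calc -(‖K ψ‖ * √(1 - a.re ^ 2))
      ≤ -(‖K ψ‖ * √(1 - ‖a‖ ^ 2)) := by gcongr
    _ ≤ -‖-Complex.I * ⟪ψ, K (timeEvolution K s ψ)⟫_ℂ‖ := by
      simpa using hK.norm_inner_apply_timeEvolution_le hψ hKψ s
    _ ≤ _ := neg_le_of_abs_le (Complex.abs_re_le_norm _)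

theorem IsSelfAdjoint.cos_sq_le_norm_inner_timeEvolution_sq (hK : IsSelfAdjoint K)
    (hψ : ‖ψ‖ = 1) (hKψ : ⟪ψ, K ψ⟫_ℂ = 0) {s : ℝ} (hs : 0 ≤ s) (hsπ : ‖K ψ‖ * s ≤ π / 2) :
    cos (‖K ψ‖ * s) ^ 2 ≤ ‖⟪ψ, timeEvolution K s ψ⟫_ℂ‖ ^ 2 := by
  have hcos : 0 ≤ cos (‖K ψ‖ * s) :=
    cos_nonneg_of_mem_Icc ⟨by nlinarith [pi_pos, norm_nonneg (K ψ)], hsπ⟩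
  have hle := hK.cos_le_re_inner_timeEvolution hψ hKψ hs (by linarith [pi_pos])
  exact pow_le_pow_left₀ hcos (hle.trans (Complex.re_le_norm _)) 2

theorem norm_inner_timeEvolution_add_smul_one (K : E →L[ℂ] E) (r s : ℝ) (x y : E) :
    ‖⟪x, timeEvolution (K + r • 1) s y⟫_ℂ‖ = ‖⟪x, timeEvolution K s y⟫_ℂ‖ := by
  have hphase : timeEvolution (K + r • 1) s =
      Complex.exp (↑(-(s * r)) * Complex.I) • timeEvolution K s := by
    rw [timeEvolution, ← Complex.coe_smul, NormedSpace.exp_smul_add_smul_one, timeEvolution]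
    congr 2
    push_cast
    ring
  rw [hphase, smul_apply, inner_smul_right, norm_mul, Complex.norm_exp_ofReal_mul_I, one_mul]

end TimeEvolution

theorem stmt_15 {E : Type*} [NormedAddCommGroup E] [InnerProductSpace ℂ E] [CompleteSpace E]
    (H : E →L[ℂ] E) (hH : IsSelfAdjoint H)
    (ψ : E) (hψ : ‖ψ‖ = 1) (hbar : ℝ) (hhbar : 0 < hbar)
    (Ebar : ℝ) (hEbar : Ebar = (⟪ψ, H ψ⟫_ℂ).re)
    (ΔE : ℝ)
    (hΔE : ΔE = Real.sqrt ((⟪ψ, ((H - Ebar • 1) * (H - Ebar • 1)) ψ⟫_ℂ).re))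
    (hpos : 0 < ΔE)
    (t : ℝ) (ht0 : 0 ≤ t) (ht : t ≤ Real.pi * hbar / (2 * ΔE)) :
    Real.cos (t * ΔE / hbar) ^ 2
      ≤ ‖⟪ψ, (NormedSpace.exp ((-(Complex.I * t) / hbar) • H)) ψ⟫_ℂ‖ ^ 2 := by
  set K := H - Ebar • (1 : E →L[ℂ] E)
  have hK : IsSelfAdjoint K := hH.sub ((IsSelfAdjoint.all Ebar).smul (.one _))
  have hKsymm : ∀ x y, ⟪K x, y⟫_ℂ = ⟪x, K y⟫_ℂ := hK.isSymmetric
  have hKψ : ⟪ψ, K ψ⟫_ℂ = 0 := by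
    have hHψ : ((⟪ψ, H ψ⟫_ℂ).re : ℂ) = ⟪ψ, H ψ⟫_ℂ := by
      have hHsymm : ∀ x y, ⟪H x, y⟫_ℂ = ⟪x, H y⟫_ℂ := hH.isSymmetric
      rw [← hHsymm]
      exact hH.isSymmetric.coe_re_inner_apply_self ψ
    simp [K, inner_self_eq_norm_sq_to_K, hψ, hEbar, hHψ]
  have hΔ : ΔE = ‖K ψ‖ := by
    rw [hΔE, mul_apply_eq_comp, ← hKsymm, ← RCLike.re_to_complex,
      inner_self_eq_norm_sq, sqrt_sq (norm_nonneg _)]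
  have hU : NormedSpace.exp ((-(Complex.I * t) / hbar) • H) =
      timeEvolution (K + Ebar • 1) (t / hbar) := by
    rw [sub_add_cancel, timeEvolution]
    push_cast
    ring_nf
  have hsπ : ‖K ψ‖ * (t / hbar) ≤ π / 2 := by
    rw [← hΔ, mul_div_assoc', div_le_iff₀ hhbar]
    rw [le_div_iff₀ (by positivity)] at ht
    linarith
  rw [hU, norm_inner_timeEvolution_add_smul_one, hΔ, mul_div_right_comm, mul_comm]
  exact hK.cos_sq_le_norm_inner_timeEvolution_sq hψ hKψ (by positivity) hsπ
end

section
/- Let f : ℝ → ℝ, g ∈ ℝ, E ∈ ℝ. Let φ : ℝ → ℂ be twice differentiable on (0,∞) and satisfy the singular-oscillator eigenvalue equation −(1/2)φ''(x) + (1/2)x²·φ(x) + (g²/x²)·φ(x) = E·φ(x) for all x > 0. Let u : ℝ → ℝ be twice differentiable with u''(t) + u'(t)² − e^{−4u(t)} + f(t) = 0 for all t, and let θ : ℝ → ℝ be differentiable with θ'(t) = e^{−2u(t)}. Define ψ(x,t) := exp(−i·θ(t)·E + (−u(t) + i·u'(t)·x²)/2)·φ(x·e^{−u(t)}). Then ψ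 solves the time-dependent Schrödinger equation i·∂ψ/∂t (x,t) = −(1/2)·∂²ψ/∂x² (x,t) + (1/2)·f(t)·x²·ψ(x,t) + (g²/x²)·ψ(x,t) for all x > 0 and t ∈ ℝ. -/
/-!
Write `ψ = A · φ(x c)` with `c = e^{-u}` and `A = exp(-iθE - u/2 + iu'x²/2)`. The chirp
`e^{iu'x²/2}` is what makes the `φ'` terms of `i∂ₜψ` and `-½∂ₓ²ψ` cancel. What remains is the
eigenvalue equation at `y = x c` multiplied by `c²`, whose energy term is absorbed by
`θ' = c²` and whose `x²` terms cancel by `u'' + u'² - c⁴ + f = 0`.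
-/

open Complex Filter Topology

theorem hasDerivAt_comp_mul_const {φ : ℝ → ℂ} {φ'y : ℂ} {c ξ : ℝ}
    (hφ : HasDerivAt φ φ'y (ξ * c)) : HasDerivAt (fun ξ => φ (ξ * c)) (c * φ'y) ξ := by
  simpa [Function.comp_def, real_smul] using hφ.scomp ξ ((hasDerivAt_id ξ).mul_const c)

theorem hasDerivAt_add_mul_sq_div_two (α β γ : ℂ) (ξ : ℝ) :
    HasDerivAt (fun ξ : ℝ => α + (β + γ * (ξ : ℂ) ^ 2) / 2) (γ * ξ) ξ := by
  have h := ((((hasDerivAt_id ξ).ofReal_comp.pow 2).const_mul γ).const_add β).div_const 2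
  simpa [mul_assoc, mul_div_assoc] using h.const_add α

theorem deriv_deriv_cexp_mul {S S' F F' : ℝ → ℂ} {S'' F'' : ℂ} {x : ℝ}
    (hS : ∀ᶠ ξ in 𝓝 x, HasDerivAt S (S' ξ) ξ) (hF : ∀ᶠ ξ in 𝓝 x, HasDerivAt F (F' ξ) ξ)
    (hS' : HasDerivAt S' S'' x) (hF' : HasDerivAt F' F'' x) :
    deriv (fun ξ => deriv (fun ξ' => cexp (S ξ') * F ξ') ξ) x
      = cexp (S x) * ((S' x ^ 2 + S'') * F x + 2 * S' x * F' x + F'') := by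
  have hD : (fun ξ => deriv (fun ξ' => cexp (S ξ') * F ξ') ξ)
      =ᶠ[𝓝 x] fun ξ => cexp (S ξ) * (S' ξ * F ξ + F' ξ) := by
    filter_upwards [hS, hF] with ξ hSξ hFξ
    rw [(hSξ.cexp.fun_mul hFξ).deriv]
    ring
  rw [hD.deriv_eq,
    (hS.self_of_nhds.cexp.fun_mul ((hS'.fun_mul hF.self_of_nhds).fun_add hF')).deriv]
  ring

theorem hasDerivAt_lens_time {θ u u' : ℝ → ℝ} {θ't u''t : ℝ} {φ : ℝ → ℂ} {φ'y : ℂ}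
    {E x t : ℝ} (hθ : HasDerivAt θ θ't t) (hu : HasDerivAt u (u' t) t)
    (hu' : HasDerivAt u' u''t t) (hφ : HasDerivAt φ φ'y (x * Real.exp (-u t))) :
    HasDerivAt (fun τ => cexp (-I * θ τ * E + (-(u τ : ℂ) + I * u' τ * (x : ℂ) ^ 2) / 2)
        * φ (x * Real.exp (-u τ)))
      (cexp (-I * θ t * E + (-(u t : ℂ) + I * u' t * (x : ℂ) ^ 2) / 2)
        * ((-I * θ't * E + (-(u' t : ℂ) + I * u''t * (x : ℂ) ^ 2) / 2) * φ (x * Real.exp (-u t))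
          - x * Real.exp (-u t) * u' t * φ'y)) t := by
  have hS := ((hθ.ofReal_comp.const_mul (-I)).mul_const (E : ℂ)).add
    ((hu.ofReal_comp.neg.add ((hu'.ofReal_comp.const_mul I).mul_const ((x : ℂ) ^ 2))).div_const 2)
  have hF := hφ.scomp t ((hu.neg.exp).const_mul x)
  refine (hS.cexp.fun_mul hF).congr_deriv ?_
  simp only [Pi.add_apply, Pi.neg_apply, Function.comp_apply, real_smul]
  push_cast
  ring

theorem singularOscillator_eigen_dilation {g E c x : ℝ} {p p'' : ℂ} (hc : c ≠ 0) (hx : x ≠ 0)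
    (h : -(1 / 2 : ℂ) * p'' + (1 / 2 : ℂ) * ((x * c : ℝ) : ℂ) ^ 2 * p
      + ((g : ℂ) ^ 2 / ((x * c : ℝ) : ℂ) ^ 2) * p = E * p) :
    -(1 / 2 : ℂ) * (c : ℂ) ^ 2 * p'' + (1 / 2 : ℂ) * (x : ℂ) ^ 2 * (c : ℂ) ^ 4 * p
      + (g : ℂ) ^ 2 / (x : ℂ) ^ 2 * p = E * (c : ℂ) ^ 2 * p := by
  have hc' : (c : ℂ) ≠ 0 := ofReal_ne_zero.2 hc
  have hx' : (x : ℂ) ≠ 0 := ofReal_ne_zero.2 hx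
  push_cast at h
  field_simp at h ⊢
  linear_combination h

theorem stmt_19 (f : ℝ → ℝ) (g E : ℝ)
    (φ φ' φ'' : ℝ → ℂ)
    (hφ : ∀ x : ℝ, 0 < x → HasDerivAt φ (φ' x) x)
    (hφ' : ∀ x : ℝ, 0 < x → HasDerivAt φ' (φ'' x) x)
    (heigen : ∀ x : ℝ, 0 < x →
      -(1 / 2 : ℂ) * φ'' x + (1 / 2 : ℂ) * (x : ℂ) ^ 2 * φ x
        + ((g : ℂ) ^ 2 / (x : ℂ) ^ 2) * φ x = (E : ℂ) * φ x)
    (u u' u'' : ℝ → ℝ)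
    (hu : ∀ t, HasDerivAt u (u' t) t)
    (hu' : ∀ t, HasDerivAt u' (u'' t) t)
    (hueq : ∀ t, u'' t + u' t ^ 2 - Real.exp (-4 * u t) + f t = 0)
    (θ : ℝ → ℝ)
    (hθ : ∀ t, HasDerivAt θ (Real.exp (-2 * u t)) t)
    (ψ : ℝ → ℝ → ℂ)
    (hψ : ψ = fun (x t : ℝ) =>
      Complex.exp (-Complex.I * (θ t) * (E : ℂ)
          + (-(u t : ℂ) + Complex.I * (u' t : ℂ) * (x : ℂ) ^ 2) / 2)
        * φ (x * Real.exp (-u t))) :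
    ∀ x t : ℝ, 0 < x →
      Complex.I * deriv (fun τ => ψ x τ) t
        = -(1 / 2 : ℂ) * deriv (fun ξ => deriv (fun ξ' => ψ ξ' t) ξ) x
          + (1 / 2 : ℂ) * (f t : ℂ) * (x : ℂ) ^ 2 * ψ x t
          + ((g : ℂ) ^ 2 / (x : ℂ) ^ 2) * ψ x t := by
  intro x t hx
  subst hψ
  beta_reduce
  set c := Real.exp (-u t) with hc_def
  have hc : 0 < c := Real.exp_pos _
  have hxc : 0 < x * c := mul_pos hx hc
  have hφ_dilated : ∀ᶠ ξ in 𝓝 x, HasDerivAt (fun ξ => φ (ξ * c)) (c * φ' (ξ * c)) ξ :=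
    (eventually_gt_nhds hx).mono fun ξ hξ => hasDerivAt_comp_mul_const (hφ _ (mul_pos hξ hc))
  have hspace := deriv_deriv_cexp_mul
    (S := fun ξ : ℝ => -I * θ t * E + (-(u t : ℂ) + I * u' t * (ξ : ℂ) ^ 2) / 2)
    (.of_forall (hasDerivAt_add_mul_sq_div_two _ _ _)) hφ_dilated
    ((hasDerivAt_id (x : ℂ)).comp_ofReal.const_mul _)
    ((hasDerivAt_comp_mul_const (hφ' _ hxc)).const_mul (c : ℂ))
  rw [hspace, (hasDerivAt_lens_time (hθ t) (hu t) (hu' t) (hφ _ hxc)).deriv, ← hc_def]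
  have hθ' : (Real.exp (-2 * u t) : ℂ) = (c : ℂ) ^ 2 := by
    rw [← ofReal_pow, ← Real.exp_nat_mul]; ring_nf
  have hu'' : (u'' t : ℂ) = (c : ℂ) ^ 4 - (u' t : ℂ) ^ 2 - f t := by
    have hc4 : Real.exp (-4 * u t) = c ^ 4 := by rw [← Real.exp_nat_mul]; ring_nf
    exact_mod_cast (by linarith [hueq t] : u'' t = c ^ 4 - u' t ^ 2 - f t)
  have hφ_eigen := singularOscillator_eigen_dilation hc.ne' hx.ne' (heigen _ hxc)
  rw [hθ', hu'']
  set A := cexp (-I * θ t * E + (-(u t : ℂ) + I * u' t * (x : ℂ) ^ 2) / 2)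
  linear_combination
    -A * hφ_eigen + A * φ (x * c) * ((c ^ 4 - f t) * x ^ 2 / 2 - E * c ^ 2) * I_sq
end
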